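/- For any finite continued fraction of positive integers with value p/q in lowest terms (p, q coprime positive integers), the reversed continued fraction has value p/q' where q·q' ≡ (-1)^(n+1) (mod p), n being the length of the fraction. -/

import Mathlib

/-- Value of the continued fraction a₁ + 1/(a₂ + 1/(⋯ + 1/aₙ)). -/
def cf : List ℕ → ℚ
  | [] => 0
  | a :: l => a + (cf l)⁻¹

/-!
With `K = ∏ᵢ !![aᵢ, 1; 1, 0]`, the entries of `K` are continuants and `cf l = K₀₀ / K₁₀`.
Each factor is symmetric, so reversing the list transposes `K`: `cf l.reverse = K₀₀ / K₀₁`.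
Since `det K = (-1)ⁿ`, both fractions are in lowest terms, which forces `p = K₀₀`,
`q = K₁₀`, `q' = K₀₁`; the determinant identity `K₁₀ K₀₁ = K₀₀ K₁₁ - (-1)ⁿ` is then
the congruence.
-/

open Matrix

namespace Matrix

variable {R : Type*} [CommRing R]

theorem isCoprime_row_of_isUnit_det (A : Matrix (Fin 2) (Fin 2) R) (hA : IsUnit A.det)
    (i : Fin 2) : IsCoprime (A i 0) (A i 1) := by
  obtain ⟨u, hu⟩ := hA
  rw [det_fin_two] at hu
  refine match i with
  | 0 => ⟨↑u⁻¹ * A 1 1, -(↑u⁻¹ * A 1 0), ?_⟩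
  | 1 => ⟨-(↑u⁻¹ * A 0 1), ↑u⁻¹ * A 0 0, ?_⟩ <;>
  · linear_combination -(↑u⁻¹ : R) * hu + u.inv_mul

theorem isCoprime_col_of_isUnit_det (A : Matrix (Fin 2) (Fin 2) R) (hA : IsUnit A.det)
    (j : Fin 2) : IsCoprime (A 0 j) (A 1 j) :=
  isCoprime_row_of_isUnit_det Aᵀ (by rwa [det_transpose]) j

end Matrix

def cfMatrix (a : ℕ) : Matrix (Fin 2) (Fin 2) ℤ := !![(a : ℤ), 1; 1, 0]

def cfProd (l : List ℕ) : Matrix (Fin 2) (Fin 2) ℤ := (l.map cfMatrix).prod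

@[simp] theorem cfProd_nil : cfProd [] = 1 := rfl

@[simp] theorem cfProd_cons (a : ℕ) (l : List ℕ) : cfProd (a :: l) = cfMatrix a * cfProd l :=
  List.prod_cons

theorem cfProd_cons_zero_zero (a : ℕ) (l : List ℕ) :
    cfProd (a :: l) 0 0 = a * cfProd l 0 0 + cfProd l 1 0 := by
  simp [cfMatrix, mul_apply, Fin.sum_univ_two]

theorem cfProd_cons_one_zero (a : ℕ) (l : List ℕ) : cfProd (a :: l) 1 0 = cfProd l 0 0 := by
  simp [cfMatrix, mul_apply, Fin.sum_univ_two]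

theorem cfProd_reverse (l : List ℕ) : cfProd l.reverse = (cfProd l)ᵀ := by
  have hsymm : ∀ a, (cfMatrix a)ᵀ = cfMatrix a := fun a => by
    ext i j; fin_cases i <;> fin_cases j <;> rfl
  simp only [cfProd, transpose_list_prod, List.map_reverse, List.map_map, Function.comp_def,
    hsymm]

theorem det_cfProd (l : List ℕ) : (cfProd l).det = (-1) ^ l.length := by
  induction l with
  | nil => simp
  | cons a l ih =>
    rw [cfProd_cons, det_mul, ih, List.length_cons, pow_succ']
    simp [cfMatrix, det_fin_two_of]

theorem isUnit_det_cfProd (l : List ℕ) : IsUnit (cfProd l).det := by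
  rw [det_cfProd]; exact isUnit_neg_one.pow _

theorem cfProd_zero_zero_pos_and_one_zero_nonneg {l : List ℕ} (hpos : ∀ a ∈ l, 0 < a) :
    0 < cfProd l 0 0 ∧ 0 ≤ cfProd l 1 0 := by
  induction l with
  | nil => simp
  | cons a l ih =>
    obtain ⟨h00, h10⟩ := ih fun b hb => hpos b (List.mem_cons_of_mem a hb)
    have ha : 0 < (a : ℤ) := by exact_mod_cast hpos a List.mem_cons_self
    rw [cfProd_cons_zero_zero, cfProd_cons_one_zero]
    exact ⟨by positivity, h00.le⟩

theorem cfProd_zero_zero_pos {l : List ℕ} (hpos : ∀ a ∈ l, 0 < a) : 0 < cfProd l 0 0 :=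
  (cfProd_zero_zero_pos_and_one_zero_nonneg hpos).1

theorem cfProd_one_zero_pos {l : List ℕ} (hne : l ≠ []) (hpos : ∀ a ∈ l, 0 < a) :
    0 < cfProd l 1 0 := by
  obtain ⟨a, l, rfl⟩ := List.exists_cons_of_ne_nil hne
  rw [cfProd_cons_one_zero]
  exact cfProd_zero_zero_pos fun b hb => hpos b (List.mem_cons_of_mem a hb)

theorem cfProd_zero_one_pos {l : List ℕ} (hne : l ≠ []) (hpos : ∀ a ∈ l, 0 < a) :
    0 < cfProd l 0 1 := by
  simpa [cfProd_reverse] using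
    cfProd_one_zero_pos (List.reverse_ne_nil_iff.mpr hne) (by simpa using hpos)

theorem cf_eq_cfProd_div {l : List ℕ} (hpos : ∀ a ∈ l, 0 < a) :
    cf l = (cfProd l 0 0 : ℚ) / (cfProd l 1 0 : ℚ) := by
  induction l with
  | nil => simp [cf]
  | cons a l ih =>
    have hpos' : ∀ b ∈ l, 0 < b := fun b hb => hpos b (List.mem_cons_of_mem a hb)
    have h00 : (cfProd l 0 0 : ℚ) ≠ 0 := by exact_mod_cast (cfProd_zero_zero_pos hpos').ne'
    rw [cf, ih hpos', inv_div, cfProd_cons_zero_zero, cfProd_cons_one_zero]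
    push_cast
    field_simp

theorem stmt_10_general (l : List ℕ) (hne : l ≠ []) (hpos : ∀ a ∈ l, 0 < a)
    (p q : ℕ) (hq : 0 < q) (hco : Nat.Coprime p q)
    (hval : cf l = (p : ℚ) / q) :
    ∃ q' : ℕ, 0 < q' ∧ Nat.Coprime p q' ∧ cf l.reverse = (p : ℚ) / q' ∧
      (q * q' : ℤ) ≡ (-1) ^ (l.length + 1) [ZMOD p] := by
  set K := cfProd l with hK
  have hdet : K 0 0 * K 1 1 - K 0 1 * K 1 0 = (-1) ^ l.length := by
    rw [← det_fin_two, det_cfProd]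
  obtain ⟨hpK, hqK⟩ : (p : ℤ) = K 0 0 ∧ (q : ℤ) = K 1 0 := by
    have hcopK : IsCoprime (K 0 0) (K 1 0) :=
      isCoprime_col_of_isUnit_det K (isUnit_det_cfProd l) 0
    refine Rat.div_int_inj (by exact_mod_cast hq) (cfProd_one_zero_pos hne hpos) hco
      (Int.isCoprime_iff_gcd_eq_one.mp hcopK) ?_
    rw [← cf_eq_cfProd_div hpos]
    simpa only [Int.cast_natCast] using hval.symm
  obtain ⟨q', hq'⟩ : ∃ q' : ℕ, (q' : ℤ) = K 0 1 :=
    ⟨_, Int.toNat_of_nonneg (cfProd_zero_one_pos hne hpos).le⟩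
  refine ⟨q', ?_, ?_, ?_, ?_⟩
  · rw [← Int.natCast_pos, hq']
    exact cfProd_zero_one_pos hne hpos
  · rw [← Nat.isCoprime_iff_coprime, hpK, hq']
    exact isCoprime_row_of_isUnit_det K (isUnit_det_cfProd l) 0
  · rw [cf_eq_cfProd_div (by simpa using hpos), cfProd_reverse, transpose_apply,
      transpose_apply, ← hK, ← hpK, ← hq']
    simp only [Int.cast_natCast]
  · refine Int.modEq_iff_dvd.mpr ⟨-K 1 1, ?_⟩
    rw [hpK, hqK, hq', pow_succ]
    linear_combination hdet

theorem stmt_10 (l : List ℕ) (hne : l ≠ []) (hpos : ∀ a ∈ l, 0 < a)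
    (p q : ℕ) (hp : 0 < p) (hq : 0 < q) (hco : Nat.Coprime p q)
    (hval : cf l = (p : ℚ) / q) :
    ∃ q' : ℕ, 0 < q' ∧ Nat.Coprime p q' ∧ cf l.reverse = (p : ℚ) / q' ∧
      (q * q' : ℤ) ≡ (-1) ^ (l.length + 1) [ZMOD p] :=
  stmt_10_general l hne hpos p q hq hco hval
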